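/- Let p ≥ 1, β > 0, A ∈ ℝ, c ∈ ℝ^p, and let P : ℝ × ℝ^p → ℝ. Suppose v : ℝ × ℝ^p → ℝ is strictly positive everywhere, differentiable in t and twice differentiable in x, and satisfies for all (t,x): ∂ₜv(t,x) + exp(−β·⟨c,x⟩) · ( (1/(2β)) · Δ_x( y ↦ exp(β·⟨c,y⟩)·v(t,y) )(x) + β·(P(t,x) − A)·exp(β·⟨c,x⟩)·v(t,x) ) = 0. Then the function u(t,x) := −(1/β)·Real.log (v(t,x)) satisfies, for all (t,x), (1/(2β))·Δu(t,x) + ∂ₜu(t,x) − ( (1/2)·‖c − ∇u(t,x)‖² + P(t,x) ) + A = 0. -/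

import Mathlib

open scoped RealInnerProductSpace

/-- The spatial Laplacian of `f : ℝ^p → ℝ`: the sum of the second derivatives in the
directions of the standard orthonormal basis (the trace of the Hessian). -/
noncomputable def laplacian {p : ℕ} (f : EuclideanSpace ℝ (Fin p) → ℝ)
    (x : EuclideanSpace ℝ (Fin p)) : ℝ :=
  ∑ i : Fin p,
    fderiv ℝ (fun y => fderiv ℝ f y (EuclideanSpace.single i 1)) x (EuclideanSpace.single i 1)

/-
Hopf–Cole transform. For `w = exp (β ⟪c, ·⟫) * v` the product rule gives
`exp (-β ⟪c, x⟫) Δw = Δv + 2β ⟪c, ∇v⟫ + β² ‖c‖² v`, and the chain rule for `u = -β⁻¹ log v` gives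
`∇u = -∇v / (β v)`, `Δu = -(Δv / v - ‖∇v‖² / v²) / β`, `∂ₜu = -∂ₜv / (β v)`. Substituting these
into the equation for `v` and multiplying by `-1 / (β v)` yields the equation for `u`.
-/

section

variable {p : ℕ}

/- Mathlib's `InnerProductSpace.laplacian` calculus assumes `C²`; the functions here are only
twice differentiable, so we compute with coordinate directional derivatives instead. -/
noncomputable def partialDeriv (i : Fin p) (f : EuclideanSpace ℝ (Fin p) → ℝ)
    (x : EuclideanSpace ℝ (Fin p)) : ℝ :=
  fderiv ℝ f x (EuclideanSpace.single i 1)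

theorem laplacian_eq_sum_partialDeriv (f : EuclideanSpace ℝ (Fin p) → ℝ)
    (x : EuclideanSpace ℝ (Fin p)) :
    laplacian f x = ∑ i, partialDeriv i (partialDeriv i f) x :=
  rfl

theorem gradient_apply_eq_partialDeriv (f : EuclideanSpace ℝ (Fin p) → ℝ)
    (x : EuclideanSpace ℝ (Fin p)) (i : Fin p) : gradient f x i = partialDeriv i f x := by
  rw [partialDeriv, ← inner_gradient_left, EuclideanSpace.inner_single_right]
  simp

theorem inner_gradient_eq_sum_partialDeriv (f g : EuclideanSpace ℝ (Fin p) → ℝ)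
    (x : EuclideanSpace ℝ (Fin p)) :
    ⟪gradient f x, gradient g x⟫ = ∑ i, partialDeriv i f x * partialDeriv i g x := by
  simp only [PiLp.inner_apply, gradient_apply_eq_partialDeriv, RCLike.inner_apply, conj_trivial,
    mul_comm]

theorem DifferentiableAt.partialDeriv {f : EuclideanSpace ℝ (Fin p) → ℝ}
    {x : EuclideanSpace ℝ (Fin p)} (h : DifferentiableAt ℝ (fderiv ℝ f) x) (i : Fin p) :
    DifferentiableAt ℝ (partialDeriv i f) x :=
  h.clm_apply (differentiableAt_const _)

theorem laplacian_comp {φ φ' : ℝ → ℝ} {φ'' : ℝ} {f : EuclideanSpace ℝ (Fin p) → ℝ}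
    {x : EuclideanSpace ℝ (Fin p)}
    (hφ : ∀ y, HasDerivAt φ (φ' (f y)) (f y)) (hφ' : HasDerivAt φ' φ'' (f x))
    (hf : Differentiable ℝ f) (hf' : DifferentiableAt ℝ (fderiv ℝ f) x) :
    laplacian (fun y => φ (f y)) x = φ' (f x) * laplacian f x + φ'' * ‖gradient f x‖ ^ 2 := by
  have hpartial : ∀ i, partialDeriv i (fun y => φ (f y)) =
      fun y => φ' (f y) * partialDeriv i f y := by
    intro i; funext y
    have h : HasFDerivAt (fun y => φ (f y)) (φ' (f y) • fderiv ℝ f y) y :=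
      (hφ y).comp_hasFDerivAt y (hf y).hasFDerivAt
    simp only [partialDeriv, h.fderiv, smul_apply, smul_eq_mul]
  have hsecond : ∀ i, partialDeriv i (partialDeriv i (fun y => φ (f y))) x =
      φ' (f x) * partialDeriv i (partialDeriv i f) x + φ'' * partialDeriv i f x ^ 2 := by
    intro i
    have h : HasFDerivAt (fun y => φ' (f y) * partialDeriv i f y)
        (φ' (f x) • fderiv ℝ (partialDeriv i f) x + partialDeriv i f x • φ'' • fderiv ℝ f x) x :=
      (hφ'.comp_hasFDerivAt x (hf x).hasFDerivAt).mul (hf'.partialDeriv i).hasFDerivAt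
    rw [hpartial, partialDeriv, h.fderiv]
    simp only [partialDeriv, add_apply, smul_apply, smul_eq_mul]
    ring
  rw [← real_inner_self_eq_norm_sq, inner_gradient_eq_sum_partialDeriv,
    laplacian_eq_sum_partialDeriv, laplacian_eq_sum_partialDeriv, Finset.mul_sum, Finset.mul_sum,
    ← Finset.sum_add_distrib]
  exact Finset.sum_congr rfl fun i _ => by rw [hsecond]; ring

theorem laplacian_mul {f g : EuclideanSpace ℝ (Fin p) → ℝ} {x : EuclideanSpace ℝ (Fin p)}
    (hf : Differentiable ℝ f) (hg : Differentiable ℝ g)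
    (hf' : DifferentiableAt ℝ (fderiv ℝ f) x) (hg' : DifferentiableAt ℝ (fderiv ℝ g) x) :
    laplacian (fun y => f y * g y) x =
      f x * laplacian g x + 2 * ⟪gradient f x, gradient g x⟫ + laplacian f x * g x := by
  have hpartial : ∀ i, partialDeriv i (fun y => f y * g y) =
      fun y => f y * partialDeriv i g y + partialDeriv i f y * g y := by
    intro i; funext y
    have h : HasFDerivAt (fun y => f y * g y) (f y • fderiv ℝ g y + g y • fderiv ℝ f y) y :=
      (hf y).hasFDerivAt.mul (hg y).hasFDerivAt
    simp only [partialDeriv, h.fderiv, add_apply, smul_apply, smul_eq_mul]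
    ring
  have hsecond : ∀ i, partialDeriv i (partialDeriv i (fun y => f y * g y)) x =
      f x * partialDeriv i (partialDeriv i g) x + 2 * (partialDeriv i f x * partialDeriv i g x)
        + partialDeriv i (partialDeriv i f) x * g x := by
    intro i
    have h : HasFDerivAt (fun y => f y * partialDeriv i g y + partialDeriv i f y * g y)
        ((f x • fderiv ℝ (partialDeriv i g) x + partialDeriv i g x • fderiv ℝ f x) +
          (partialDeriv i f x • fderiv ℝ g x + g x • fderiv ℝ (partialDeriv i f) x)) x :=
      ((hf x).hasFDerivAt.mul (hg'.partialDeriv i).hasFDerivAt).add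
        ((hf'.partialDeriv i).hasFDerivAt.mul (hg x).hasFDerivAt)
    rw [hpartial, partialDeriv, h.fderiv]
    simp only [partialDeriv, add_apply, smul_apply, smul_eq_mul]
    ring
  simp only [laplacian_eq_sum_partialDeriv, hsecond, inner_gradient_eq_sum_partialDeriv,
    Finset.sum_add_distrib, Finset.mul_sum, Finset.sum_mul]

theorem ContinuousLinearMap.laplacian_eq_zero (L : EuclideanSpace ℝ (Fin p) →L[ℝ] ℝ)
    (x : EuclideanSpace ℝ (Fin p)) : laplacian L x = 0 := by
  have h : ∀ i, partialDeriv i L = fun _ => L (EuclideanSpace.single i 1) := by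
    intro i; funext y; simp [partialDeriv, L.fderiv]
  simp [laplacian_eq_sum_partialDeriv, h, partialDeriv]

theorem gradient_comp {φ : ℝ → ℝ} {φ' : ℝ} {f : EuclideanSpace ℝ (Fin p) → ℝ}
    {x : EuclideanSpace ℝ (Fin p)} (hφ : HasDerivAt φ φ' (f x)) (hf : DifferentiableAt ℝ f x) :
    gradient (fun y => φ (f y)) x = φ' • gradient f x := by
  have h : HasFDerivAt (fun y => φ (f y)) (φ' • fderiv ℝ f x) x :=
    hφ.comp_hasFDerivAt x hf.hasFDerivAt
  simp [gradient, h.fderiv]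

theorem gradient_innerSL (c x : EuclideanSpace ℝ (Fin p)) : gradient (innerSL ℝ c) x = c := by
  rw [gradient, (innerSL ℝ c).fderiv]
  exact (InnerProductSpace.toDual ℝ _).symm_apply_apply c

theorem laplacian_exp_inner_mul (c : EuclideanSpace ℝ (Fin p)) (β : ℝ)
    {f : EuclideanSpace ℝ (Fin p) → ℝ} {x : EuclideanSpace ℝ (Fin p)}
    (hf : Differentiable ℝ f) (hf' : DifferentiableAt ℝ (fderiv ℝ f) x) :
    laplacian (fun y => Real.exp (β * ⟪c, y⟫) * f y) x = Real.exp (β * ⟪c, x⟫) *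
      (laplacian f x + 2 * β * ⟪c, gradient f x⟫ + β ^ 2 * ‖c‖ ^ 2 * f x) := by
  have hsmooth : ContDiff ℝ 2 fun y : EuclideanSpace ℝ (Fin p) => Real.exp (β * ⟪c, y⟫) :=
    Real.contDiff_exp.comp (contDiff_const.mul (contDiff_const.inner ℝ contDiff_id))
  have hexp : ∀ s, HasDerivAt (fun s => Real.exp (β * s)) (β * Real.exp (β * s)) s := by
    intro s; simpa [mul_comm] using ((hasDerivAt_id s).const_mul β).exp
  have hexp' : ∀ s, HasDerivAt (fun s => β * Real.exp (β * s)) (β * (β * Real.exp (β * s))) s :=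
    fun s => (hexp s).const_mul β
  have hlap := laplacian_comp (f := innerSL ℝ c) (x := x) (fun y => hexp _) (hexp' _)
    (innerSL ℝ c).differentiable
    (((innerSL ℝ c).contDiff.fderiv_right (m := 1) le_rfl).differentiable one_ne_zero x)
  have hgrad := gradient_comp (f := innerSL ℝ c) (hexp (innerSL ℝ c x))
    (innerSL ℝ c).differentiableAt
  simp only [innerSL_apply_apply, ContinuousLinearMap.laplacian_eq_zero, gradient_innerSL]
    at hlap hgrad
  rw [laplacian_mul (hsmooth.differentiable (by norm_num)) hf
    ((hsmooth.fderiv_right (m := 1) le_rfl).differentiable one_ne_zero x) hf', hlap, hgrad,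
    real_inner_smul_left]
  ring

end

theorem stmt4_general (p : ℕ) (β : ℝ) (hβ : 0 < β) (A : ℝ)
    (c : EuclideanSpace ℝ (Fin p)) (P : ℝ → EuclideanSpace ℝ (Fin p) → ℝ)
    (v : ℝ → EuclideanSpace ℝ (Fin p) → ℝ)
    (hvpos : ∀ t x, 0 < v t x)
    (hvt : ∀ x, Differentiable ℝ fun t => v t x)
    (hvx : ∀ t, Differentiable ℝ (v t))
    (hvx2 : ∀ t, Differentiable ℝ fun x => fderiv ℝ (v t) x)
    (hpde : ∀ t x, deriv (fun s => v s x) t + Real.exp (-β * ⟪c, x⟫) *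
      ((1 / (2 * β)) * laplacian (fun y => Real.exp (β * ⟪c, y⟫) * v t y) x +
        β * (P t x - A) * Real.exp (β * ⟪c, x⟫) * v t x) = 0)
    (u : ℝ → EuclideanSpace ℝ (Fin p) → ℝ)
    (hu : ∀ t x, u t x = -(1 / β) * Real.log (v t x)) :
    ∀ t x, (1 / (2 * β)) * laplacian (u t) x + deriv (fun s => u s x) t -
      ((1 / 2) * ‖c - gradient (u t) x‖ ^ 2 + P t x) + A = 0 := by
  obtain rfl : u = fun t y => -(1 / β) * Real.log (v t y) := funext₂ hu
  intro t x
  have hlog : ∀ s ≠ 0, HasDerivAt (fun s => -(1 / β) * Real.log s) (-(1 / β) * s⁻¹) s :=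
    fun s hs => (Real.hasDerivAt_log hs).const_mul _
  have hlog' : HasDerivAt (fun s => -(1 / β) * s⁻¹) (-(1 / β) * -(v t x ^ 2)⁻¹) (v t x) :=
    (hasDerivAt_inv (hvpos t x).ne').const_mul _
  have hlap := laplacian_comp (fun y => hlog _ (hvpos t y).ne') hlog' (hvx t) (hvx2 t x)
  have hgrad := gradient_comp (hlog _ (hvpos t x).ne') (hvx t x)
  have hderiv : deriv (fun s => -(1 / β) * Real.log (v s x)) t =
      -(1 / β) * (v t x)⁻¹ * deriv (fun s => v s x) t :=
    ((hlog _ (hvpos t x).ne').comp (h := fun s => v s x) t (hvt x t).hasDerivAt).deriv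
  have hv := hpde t x
  rw [laplacian_exp_inner_mul c β (hvx t) (hvx2 t x)] at hv
  rw [neg_mul, Real.exp_neg] at hv
  rw [hlap, hgrad, hderiv, norm_sub_sq_real, real_inner_smul_right, norm_smul, mul_pow,
    Real.norm_eq_abs, sq_abs]
  have hV := hvpos t x
  field_simp at hv
  field_simp
  linear_combination (-v t x) * hv

/-- if a positive `v` solves the twisted Schrödinger equation, then
`u = −(1/β)·log v` solves the viscous Hamilton–Jacobi equation. -/
theorem stmt4 (p : ℕ) (hp : 1 ≤ p) (β : ℝ) (hβ : 0 < β) (A : ℝ)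
    (c : EuclideanSpace ℝ (Fin p)) (P : ℝ → EuclideanSpace ℝ (Fin p) → ℝ)
    (v : ℝ → EuclideanSpace ℝ (Fin p) → ℝ)
    (hvpos : ∀ t x, 0 < v t x)
    (hvt : ∀ x, Differentiable ℝ fun t => v t x)
    (hvx : ∀ t, Differentiable ℝ (v t))
    (hvx2 : ∀ t, Differentiable ℝ fun x => fderiv ℝ (v t) x)
    (hpde : ∀ t x, deriv (fun s => v s x) t + Real.exp (-β * ⟪c, x⟫) *
      ((1 / (2 * β)) * laplacian (fun y => Real.exp (β * ⟪c, y⟫) * v t y) x +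
        β * (P t x - A) * Real.exp (β * ⟪c, x⟫) * v t x) = 0)
    (u : ℝ → EuclideanSpace ℝ (Fin p) → ℝ)
    (hu : ∀ t x, u t x = -(1 / β) * Real.log (v t x)) :
    ∀ t x, (1 / (2 * β)) * laplacian (u t) x + deriv (fun s => u s x) t -
      ((1 / 2) * ‖c - gradient (u t) x‖ ^ 2 + P t x) + A = 0 :=
  stmt4_general p β hβ A c P v hvpos hvt hvx hvx2 hpde u hu
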